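/- arXiv:2510.07728 — 2 statements merged into one kernel-verified Lean document; each statement's English description precedes it below -/
import Mathlib

section
/- Suppose each token k of a vocabulary is placed in the green set G independently with probability γ. Then for the watermarked sampling probability p̂_k = E_{G}[ α^{1(k∈G)} p_k / (Σ_{i∉G} p_i + α Σ_{i∈G} p_i) ] with α ≥ 1, it holds that p̂_k ≤ (1 + (α-1)γ) p_k. -/
open Finset

/-
Since `p` is a probability vector and `α ≥ 1`, the normaliser
`∑_{i∉G} p i + α ∑_{i∈G} p i` is at least `1`, so `p̂_k ≤ E[α^{1(k∈G)}] p_k`.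
Writing the binomial weights as products over the tokens, `∑_G ∏_{i∈G} aᵢ ∏_{i∉G} bᵢ = ∏_i (aᵢ + bᵢ)`
gives `E[α^{1(k∈G)}] = γα + (1 - γ) = 1 + (α - 1)γ`.
-/

lemma sum_powerset_pow_mul_pow_mul_ite {V : Type*} [DecidableEq V] (s : Finset V) (γ α : ℝ)
    {k : V} (hk : k ∈ s) :
    ∑ G ∈ s.powerset, γ ^ #G * (1 - γ) ^ (#s - #G) * (if k ∈ G then α else 1)
      = 1 + (α - 1) * γ := by
  have hterm : ∀ G ∈ s.powerset,
      γ ^ #G * (1 - γ) ^ (#s - #G) * (if k ∈ G then α else 1)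
        = (∏ i ∈ G, γ * if i = k then α else 1) * ∏ _i ∈ s \ G, (1 - γ) := by
    intro G hG
    rw [prod_mul_distrib, prod_const, prod_ite_eq', prod_const,
      card_sdiff_of_subset (mem_powerset.mp hG)]
    ring
  rw [sum_congr rfl hterm, ← prod_add,
    prod_eq_single_of_mem k hk fun i _ hik => by simp [hik]]
  simp only [if_true]
  ring

lemma one_le_sum_compl_add_mul_sum {V : Type*} [Fintype V] [DecidableEq V] {p : V → ℝ}
    (hp : ∀ v, 0 ≤ p v) (hsum : ∑ v, p v = 1) {α : ℝ} (hα : 1 ≤ α) (G : Finset V) :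
    1 ≤ (∑ i ∈ Gᶜ, p i) + α * ∑ i ∈ G, p i := by
  have hsplit : (∑ i ∈ G, p i) + ∑ i ∈ Gᶜ, p i = 1 := by rw [sum_add_sum_compl, hsum]
  have hG : 0 ≤ ∑ i ∈ G, p i := sum_nonneg fun i _ => hp i
  nlinarith

/-- With each token independently green with probability `γ`, the expected watermarked
sampling probability of token `k` satisfies `p̂_k ≤ (1 + (α-1)γ) p_k`. The expectation
over the random green set `G` is written as a sum over all subsets weighted by
`γ^|G| (1-γ)^(n-|G|)`. -/
theorem stmt_7 {V : Type*} [Fintype V] [DecidableEq V] (p : V → ℝ)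
    (hp : ∀ v, 0 ≤ p v) (hsum : ∑ v, p v = 1)
    (γ α : ℝ) (hγ : γ ∈ Set.Icc (0 : ℝ) 1) (hα : 1 ≤ α) (k : V) :
    ∑ G : Finset V, γ ^ G.card * (1 - γ) ^ (Fintype.card V - G.card) *
        ((if k ∈ G then α else 1) * p k / ((∑ i ∈ Gᶜ, p i) + α * ∑ i ∈ G, p i))
      ≤ (1 + (α - 1) * γ) * p k := by
  have hterm : ∀ G : Finset V,
      γ ^ #G * (1 - γ) ^ (Fintype.card V - #G) *
        ((if k ∈ G then α else 1) * p k / ((∑ i ∈ Gᶜ, p i) + α * ∑ i ∈ G, p i))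
      ≤ γ ^ #G * (1 - γ) ^ (Fintype.card V - #G) * (if k ∈ G then α else 1) * p k := by
    intro G
    have hweight : 0 ≤ γ ^ #G * (1 - γ) ^ (Fintype.card V - #G) :=
      mul_nonneg (pow_nonneg hγ.1 _) (pow_nonneg (sub_nonneg.mpr hγ.2) _)
    have hnum : 0 ≤ (if k ∈ G then α else 1) * p k :=
      mul_nonneg (by split_ifs <;> linarith) (hp k)
    rw [mul_assoc _ (ite _ _ _)]
    exact mul_le_mul_of_nonneg_left
      (div_le_self hnum (one_le_sum_compl_add_mul_sum hp hsum hα G)) hweight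
  calc _ ≤ ∑ G : Finset V,
        γ ^ #G * (1 - γ) ^ (Fintype.card V - #G) * (if k ∈ G then α else 1) * p k :=
        sum_le_sum fun G _ => hterm G
    _ = (1 + (α - 1) * γ) * p k := by
        rw [← sum_mul, ← powerset_univ, ← card_univ,
          sum_powerset_pow_mul_pow_mul_ite univ γ α (mem_univ k)]
end

section
/- Modifying m tokens in a sequence of length T, where each modified token can affect at most k+1 green/red indicator outcomes, changes the count of green tokens by at most (k+1)m, and hence changes the standardized statistic Z = (|s|_G − T/2)/(√T/2) by at most 2(k+1)m/√T. -/
/-!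
Each indicator that flips moves the green count by exactly one, so the count moves by at most the
number of flips; and `Z` is affine in the count with slope `2 / √T`.
-/

open Finset

theorem abs_sum_sub_sum_le_card_ne_nsmul {ι G : Type*} [Fintype ι] [AddCommGroup G] [LinearOrder G]
    [IsOrderedAddMonoid G] (f g : ι → G) {c : G} (hc : ∀ i, |f i - g i| ≤ c) :
    |∑ i, f i - ∑ i, g i| ≤ #{i | f i ≠ g i} • c := by
  classical
  have hsupp : ∑ i, (f i - g i) = ∑ i with f i ≠ g i, (f i - g i) :=
    (sum_filter_of_ne fun i _ h => sub_ne_zero.mp h).symm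
  rw [← sum_sub_distrib, hsupp]
  exact (abs_sum_le_sum_abs _ _).trans (sum_le_card_nsmul _ _ _ fun i _ => hc i)

theorem abs_sub_le_one_of_zero_or_one {a b : ℝ} (ha : a = 0 ∨ a = 1) (hb : b = 0 ∨ b = 1) :
    |a - b| ≤ 1 := by
  rcases ha with rfl | rfl <;> rcases hb with rfl | rfl <;> norm_num

theorem abs_standardize_sub_le {x y c s d : ℝ} (hs : 0 ≤ s) (hxy : |x - y| ≤ d) :
    |(x - c) / (s / 2) - (y - c) / (s / 2)| ≤ 2 * d / s := by
  have hZ : (x - c) / (s / 2) - (y - c) / (s / 2) = 2 * (x - y) / s := by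
    rw [div_sub_div_same, div_div_eq_mul_div, sub_sub_sub_cancel_right, mul_comm]
  rw [hZ, abs_div, abs_mul, abs_two, abs_of_nonneg hs]
  gcongr

theorem stmt_9_general (T : ℕ) (k m : ℕ)
    (g g' : Fin T → ℝ)
    (h01 : ∀ t, g t = 0 ∨ g t = 1) (h01' : ∀ t, g' t = 0 ∨ g' t = 1)
    (hdiff : (Finset.univ.filter (fun t => g t ≠ g' t)).card ≤ (k + 1) * m) :
    |(∑ t, g' t) - ∑ t, g t| ≤ ((k : ℝ) + 1) * m ∧
      |((∑ t, g' t) - (T : ℝ) / 2) / (Real.sqrt T / 2)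
          - ((∑ t, g t) - (T : ℝ) / 2) / (Real.sqrt T / 2)|
        ≤ 2 * ((k : ℝ) + 1) * m / Real.sqrt T := by
  have hcount : |(∑ t, g' t) - ∑ t, g t| ≤ ((k : ℝ) + 1) * m := by
    have hflip := abs_sum_sub_sum_le_card_ne_nsmul g' g
      fun t => abs_sub_le_one_of_zero_or_one (h01' t) (h01 t)
    simp_rw [ne_comm (a := g' _)] at hflip
    rw [nsmul_one] at hflip
    exact hflip.trans (by exact_mod_cast hdiff)
  refine ⟨hcount, ?_⟩
  rw [mul_assoc]
  exact abs_standardize_sub_le (Real.sqrt_nonneg _) hcount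

/-- If modifying `m` tokens changes at most `(k+1)*m` green/red indicator outcomes,
then the green-token count changes by at most `(k+1)*m`, and the standardized
statistic `Z = (|s|_G - T/2)/(√T/2)` changes by at most `2(k+1)m/√T`. -/
theorem stmt_9 (T : ℕ) (hT : 0 < T) (k m : ℕ)
    (g g' : Fin T → ℝ)
    (h01 : ∀ t, g t = 0 ∨ g t = 1) (h01' : ∀ t, g' t = 0 ∨ g' t = 1)
    (hdiff : (Finset.univ.filter (fun t => g t ≠ g' t)).card ≤ (k + 1) * m) :
    |(∑ t, g' t) - ∑ t, g t| ≤ ((k : ℝ) + 1) * m ∧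
      |((∑ t, g' t) - (T : ℝ) / 2) / (Real.sqrt T / 2)
          - ((∑ t, g t) - (T : ℝ) / 2) / (Real.sqrt T / 2)|
        ≤ 2 * ((k : ℝ) + 1) * m / Real.sqrt T :=
  stmt_9_general T k m g g' h01 h01' hdiff
end
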